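/- Let n ≥ 1, m ≥ 0 and q ≥ 0 be integers and let b be either 0 or an odd integer with 0 < b < 2^q, with m + b/2^q > 0. Let N be the canonical form of n. Then for every number H whose value is −(m + b/2^q), N : H = n − 1 + 1/2^m − b/2^{m+q+1}. -/

import Mathlib

namespace SetTheory

/-- Pre-games (removed from Mathlib; restored here with Mathlib's old definition). -/
inductive PGame.{w} : Type (w + 1)
  | mk : ∀ α β : Type w, (α → PGame) → (β → PGame) → PGame

namespace PGame

def LeftMoves : PGame → Type _
  | mk l _ _ _ => l

def RightMoves : PGame → Type _
  | mk _ r _ _ => r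

def moveLeft : ∀ g : PGame, LeftMoves g → PGame
  | mk _ _ L _ => L

def moveRight : ∀ g : PGame, RightMoves g → PGame
  | mk _ _ _ R => R

/-- Simultaneous definition of `≤` (first component) and `⧏` (second component). -/
noncomputable def leLF : PGame → PGame → Prop × Prop := fun x =>
  PGame.rec (motive := fun _ => PGame → Prop × Prop)
    (fun xl xr xL xR IHxl IHxr y =>
      PGame.rec (motive := fun _ => Prop × Prop)
        (fun yl yr yL yR IHyl IHyr =>
          ((∀ i, (IHxl i (mk yl yr yL yR)).2) ∧ ∀ j, (IHyr j).2,
            (∃ i, (IHyl i).1) ∨ ∃ j, (IHxr j (mk yl yr yL yR)).1)) y) x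

noncomputable instance : LE PGame := ⟨fun x y => (leLF x y).1⟩

noncomputable instance : LT PGame := ⟨fun x y => x ≤ y ∧ ¬ y ≤ x⟩

def Numeric : PGame → Prop
  | ⟨_, _, L, R⟩ => (∀ i j, L i < R j) ∧ (∀ i, Numeric (L i)) ∧ ∀ j, Numeric (R j)

instance : Zero PGame := ⟨mk PEmpty PEmpty PEmpty.elim PEmpty.elim⟩

instance : One PGame := ⟨mk PUnit PEmpty (fun _ => 0) PEmpty.elim⟩

def neg : PGame → PGame
  | mk l r L R => mk r l (fun j => neg (R j)) (fun i => neg (L i))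

instance : Neg PGame := ⟨neg⟩

noncomputable def add : PGame → PGame → PGame := fun x =>
  PGame.rec (motive := fun _ => PGame → PGame)
    (fun xl xr xL xR IHxl IHxr y =>
      PGame.rec (motive := fun _ => PGame)
        (fun yl yr yL yR IHyl IHyr =>
          mk (xl ⊕ yl) (xr ⊕ yr) (Sum.elim (fun i => IHxl i (mk yl yr yL yR)) IHyl)
            (Sum.elim (fun j => IHxr j (mk yl yr yL yR)) IHyr)) y) x

noncomputable instance : Add PGame := ⟨add⟩

def powHalf : ℕ → PGame
  | 0 => 1
  | n + 1 => mk PUnit PUnit (fun _ => 0) (fun _ => powHalf n)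

def equivRel (x y : PGame) : Prop := x ≤ y ∧ y ≤ x

noncomputable instance setoid : Setoid PGame :=
  ⟨Relation.EqvGen equivRel, Relation.EqvGen.is_equivalence _⟩

end PGame

abbrev Game := Quotient PGame.setoid

namespace Game

noncomputable instance : Zero Game := ⟨⟦0⟧⟩

noncomputable instance : Add Game := ⟨fun a b => ⟦a.out + b.out⟧⟩

noncomputable instance : Neg Game := ⟨fun a => ⟦-a.out⟧⟩

noncomputable instance : Sub Game := ⟨fun a b => a + -b⟩

noncomputable instance : SMul ℤ Game := ⟨zsmulRec nsmulRec⟩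

end Game

end SetTheory

noncomputable section

open SetTheory PGame

universe u

/-- Ordinal sum `G : H`: players may move in the base `G` (ending all play in the
subordinate) or in the subordinate `H`. -/
def ordinalSum (G : PGame.{u}) : PGame.{u} → PGame.{u}
  | ⟨yl, yr, yL, yR⟩ =>
    ⟨G.LeftMoves ⊕ yl, G.RightMoves ⊕ yr,
     Sum.elim G.moveLeft fun j => ordinalSum G (yL j),
     Sum.elim G.moveRight fun j => ordinalSum G (yR j)⟩

/-- `G ≜ H`: equivalence modulo domination.  Every Left option of `G` is `≤` some Left
option of `H`, every Left option of `H` is `≤` some Left option of `G`, every Right option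
of `G` is `≥` some Right option of `H`, and every Right option of `H` is `≥` some Right
option of `G`. -/
def EquivDom (G H : PGame) : Prop :=
  (∀ i, ∃ j, G.moveLeft i ≤ H.moveLeft j) ∧
  (∀ j, ∃ i, H.moveLeft j ≤ G.moveLeft i) ∧
  (∀ i, ∃ j, H.moveRight j ≤ G.moveRight i) ∧
  (∀ j, ∃ i, G.moveRight i ≤ H.moveRight j)

/-- The ball `⟨a | b⟩`: the game with exactly one Left option `a` and exactly one Right
option `b`. -/
def ball (a b : PGame.{u}) : PGame.{u} :=
  ⟨PUnit, PUnit, fun _ => a, fun _ => b⟩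

/-- The canonical form of a natural number: `0 ≅ ⟨ | ⟩` and `n+1 ≅ ⟨n | ⟩`. -/
def canonNat : ℕ → PGame
  | 0 => 0
  | n + 1 => ⟨PUnit, PEmpty, fun _ => canonNat n, PEmpty.elim⟩

/-- The canonical form of an integer: for `n ≥ 0` it is `canonNat n`, and the canonical
form of a negative integer is the negative of the canonical form of its absolute value. -/
def canonInt (n : ℤ) : PGame :=
  if 0 ≤ n then canonNat n.toNat else -canonNat (-n).toNat

/-- The game value of the dyadic rational `a / 2 ^ q`. -/
def dyadicVal (a : ℤ) (q : ℕ) : Game :=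
  a • (⟦powHalf q⟧ : Game)

/-!
The value of `G : H` depends only on the value of `H`, so we may replace `H` by the canonical
form `Y` of `-(m + b/2^q)`: the game `-k` for an integer, and `⟨Y_{c+1} | Y_c⟩` at an odd
numerator `b = 2c + 1`. Writing `N = n + 1`, the ordinal sums unfold to
`N : -(k+1) = ⟨n | N : -k⟩` and `N : ⟨Y_{c+1} | Y_c⟩ = ⟨n, N : Y_{c+1} | N : Y_c⟩`, so both the
values of the `Y`'s and of the `N : Y`'s follow by induction on `q` from a single fact: a game
whose best Left option is `a` and whose best Right option is `a + 2^-k` has value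
`a + 2^-(k+1)`, provided `a` is given by a form whose options are at least `2^-(k+1)` away
from `a`. This separation is preserved by the induction.
-/
namespace SetTheory.PGame

abbrev LF (x y : PGame.{u}) : Prop := ¬ y ≤ x

infix:50 " ⧏ " => SetTheory.PGame.LF

theorem leLF_mk_fst {xl xr yl yr : Type u} (xL : xl → PGame.{u}) (xR : xr → PGame.{u})
    (yL : yl → PGame.{u}) (yR : yr → PGame.{u}) :
    (leLF (mk xl xr xL xR) (mk yl yr yL yR)).1 =
      ((∀ i, (leLF (xL i) (mk yl yr yL yR)).2) ∧ ∀ j, (leLF (mk xl xr xL xR) (yR j)).2) := rfl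

theorem leLF_mk_snd {xl xr yl yr : Type u} (xL : xl → PGame.{u}) (xR : xr → PGame.{u})
    (yL : yl → PGame.{u}) (yR : yr → PGame.{u}) :
    (leLF (mk xl xr xL xR) (mk yl yr yL yR)).2 =
      ((∃ i, (leLF (mk xl xr xL xR) (yL i)).1) ∨ ∃ j, (leLF (xR j) (mk yl yr yL yR)).1) := rfl

theorem leLF_snd_iff_not_fst (x y : PGame.{u}) :
    ((leLF x y).2 ↔ ¬ (leLF y x).1) ∧ ((leLF y x).2 ↔ ¬ (leLF x y).1) := by
  induction x generalizing y with
  | mk xl xr xL xR ihxl ihxr =>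
  induction y with
  | mk yl yr yL yR ihyl ihyr =>
  have h₁ (i) := (ihyl i).2
  have h₂ (j) := (ihxr j (mk yl yr yL yR)).2
  have h₃ (i) := (ihxl i (mk yl yr yL yR)).1
  have h₄ (j) := (ihyr j).1
  simp only [leLF_mk_fst, leLF_mk_snd, h₁, h₂, h₃, h₄, not_and_or, not_forall, not_not]
  exact ⟨trivial, trivial⟩

theorem lf_iff_leLF_snd (x y : PGame.{u}) : x ⧏ y ↔ (leLF x y).2 :=
  (leLF_snd_iff_not_fst x y).1.symm

theorem le_iff_forall_lf {x y : PGame.{u}} :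
    x ≤ y ↔ (∀ i, x.moveLeft i ⧏ y) ∧ ∀ j, x ⧏ y.moveRight j := by
  obtain ⟨xl, xr, xL, xR⟩ := x
  obtain ⟨yl, yr, yL, yR⟩ := y
  simp only [lf_iff_leLF_snd]
  rfl

theorem lf_iff_exists_le {x y : PGame.{u}} :
    x ⧏ y ↔ (∃ i, x ≤ y.moveLeft i) ∨ ∃ j, x.moveRight j ≤ y := by
  obtain ⟨xl, xr, xL, xR⟩ := x
  obtain ⟨yl, yr, yL, yR⟩ := y
  rw [lf_iff_leLF_snd]
  rfl

theorem lf_of_le_moveLeft {x y : PGame.{u}} {i : y.LeftMoves} (h : x ≤ y.moveLeft i) : x ⧏ y :=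
  lf_iff_exists_le.2 (Or.inl ⟨i, h⟩)

theorem lf_of_moveRight_le {x y : PGame.{u}} {j : x.RightMoves} (h : x.moveRight j ≤ y) : x ⧏ y :=
  lf_iff_exists_le.2 (Or.inr ⟨j, h⟩)

theorem _root_.LE.le.moveLeft_lf {x y : PGame.{u}} (h : x ≤ y) (i : x.LeftMoves) :
    x.moveLeft i ⧏ y :=
  (le_iff_forall_lf.1 h).1 i

theorem _root_.LE.le.lf_moveRight {x y : PGame.{u}} (h : x ≤ y) (j : y.RightMoves) :
    x ⧏ y.moveRight j :=
  (le_iff_forall_lf.1 h).2 j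

theorem lf_add_of_le_moveLeft_add {x y z : PGame.{u}} (i : y.LeftMoves)
    (h : x ≤ y.moveLeft i + z) : x ⧏ y + z := by
  obtain ⟨⟩ := y; obtain ⟨⟩ := z
  exact lf_of_le_moveLeft (i := Sum.inl i) h

theorem lf_add_of_le_add_moveLeft {x y z : PGame.{u}} (i : z.LeftMoves)
    (h : x ≤ y + z.moveLeft i) : x ⧏ y + z := by
  obtain ⟨⟩ := y; obtain ⟨⟩ := z
  exact lf_of_le_moveLeft (i := Sum.inr i) h

theorem add_lf_of_moveRight_add_le {x y z : PGame.{u}} (j : y.RightMoves)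
    (h : y.moveRight j + z ≤ x) : y + z ⧏ x := by
  obtain ⟨⟩ := y; obtain ⟨⟩ := z
  exact lf_of_moveRight_le (j := Sum.inl j) h

theorem add_lf_of_add_moveRight_le {x y z : PGame.{u}} (j : z.RightMoves)
    (h : y + z.moveRight j ≤ x) : y + z ⧏ x := by
  obtain ⟨⟩ := y; obtain ⟨⟩ := z
  exact lf_of_moveRight_le (j := Sum.inr j) h

protected theorem le_refl (x : PGame.{u}) : x ≤ x := by
  induction x with
  | mk xl xr xL xR ihl ihr =>
    exact le_iff_forall_lf.2 ⟨fun i => lf_of_le_moveLeft (ihl i),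
      fun j => lf_of_moveRight_le (ihr j)⟩

/-- The three rotations of transitivity have to be proved simultaneously. -/
theorem le_trans_aux (x y z : PGame.{u}) :
    (x ≤ y → y ≤ z → x ≤ z) ∧ (y ≤ z → z ≤ x → y ≤ x) ∧ (z ≤ x → x ≤ y → z ≤ y) := by
  induction x generalizing y z with
  | mk xl xr xL xR ihxl ihxr =>
  induction y generalizing z with
  | mk yl yr yL yR ihyl ihyr =>
  induction z with
  | mk zl zr zL zR ihzl ihzr =>
  refine ⟨fun h₁ h₂ => ?_, fun h₁ h₂ => ?_, fun h₁ h₂ => ?_⟩ <;>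
    refine le_iff_forall_lf.2 ⟨fun i h₃ => h₁.moveLeft_lf i ?_, fun j h₃ => h₂.lf_moveRight j ?_⟩
  · exact (ihxl i _ _).2.1 h₂ h₃
  · exact (ihzr j).2.2 h₃ h₁
  · exact (ihyl i _).2.2 h₂ h₃
  · exact (ihxr j _ _).1 h₃ h₁
  · exact (ihzl i).1 h₂ h₃
  · exact (ihyr j _).2.1 h₃ h₁

instance : Preorder PGame.{u} where
  le_refl := PGame.le_refl
  le_trans x y z := (le_trans_aux x y z).1
  lt_iff_le_not_ge _ _ := Iff.rfl

theorem add_le_add_right_aux (x y z : PGame.{u}) :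
    (x ≤ y → x + z ≤ y + z) ∧ (x ⧏ y → x + z ⧏ y + z) := by
  induction x generalizing y z with
  | mk xl xr xL xR ihxl ihxr =>
  induction y generalizing z with
  | mk yl yr yL yR ihyl ihyr =>
  induction z with
  | mk zl zr zL zR ihzl ihzr =>
  refine ⟨fun h => le_iff_forall_lf.2 ⟨?_, ?_⟩, fun h => ?_⟩
  · rintro (i | i)
    · exact (ihxl i _ _).2 (h.moveLeft_lf i)
    · exact lf_of_le_moveLeft (i := Sum.inr i) ((ihzl i).1 h)
  · rintro (j | j)
    · exact (ihyr j _).2 (h.lf_moveRight j)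
    · exact lf_of_moveRight_le (j := Sum.inr j) ((ihzr j).1 h)
  · rcases lf_iff_exists_le.1 h with ⟨i, hi⟩ | ⟨j, hj⟩
    · exact lf_of_le_moveLeft (i := Sum.inl i) ((ihyl i _).1 hi)
    · exact lf_of_moveRight_le (j := Sum.inl j) ((ihxr j _ _).1 hj)

theorem add_le_add_right' {x y : PGame.{u}} (h : x ≤ y) (z : PGame.{u}) : x + z ≤ y + z :=
  (add_le_add_right_aux x y z).1 h

theorem add_comm_le (x y : PGame.{u}) : x + y ≤ y + x := by
  induction x generalizing y with
  | mk xl xr xL xR ihxl ihxr =>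
  induction y with
  | mk yl yr yL yR ihyl ihyr =>
  refine le_iff_forall_lf.2 ⟨?_, ?_⟩
  · rintro (i | i)
    · exact lf_of_le_moveLeft (i := Sum.inr i) (ihxl i _)
    · exact lf_of_le_moveLeft (i := Sum.inl i) (ihyl i)
  · rintro (j | j)
    · exact lf_of_moveRight_le (j := Sum.inr j) (ihyr j)
    · exact lf_of_moveRight_le (j := Sum.inl j) (ihxr j _)

theorem add_le_add_left' {x y : PGame.{u}} (h : x ≤ y) (z : PGame.{u}) : z + x ≤ z + y :=
  (add_comm_le z x).trans ((add_le_add_right' h z).trans (add_comm_le y z))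

theorem add_zero_equiv (x : PGame.{u}) : equivRel (x + 0) x := by
  induction x with
  | mk xl xr xL xR ihl ihr =>
  refine ⟨le_iff_forall_lf.2 ⟨?_, fun j => ?_⟩, le_iff_forall_lf.2 ⟨fun i => ?_, ?_⟩⟩
  · rintro (i | ⟨⟨⟩⟩)
    exact lf_of_le_moveLeft (ihl i).1
  · exact lf_of_moveRight_le (j := Sum.inl j) (ihr j).1
  · exact lf_of_le_moveLeft (i := Sum.inl i) (ihl i).2
  · rintro (j | ⟨⟨⟩⟩)
    exact lf_of_moveRight_le (ihr j).2

theorem add_assoc_equiv (x y z : PGame.{u}) : equivRel (x + y + z) (x + (y + z)) := by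
  induction x generalizing y z with
  | mk xl xr xL xR ihxl ihxr =>
  induction y generalizing z with
  | mk yl yr yL yR ihyl ihyr =>
  induction z with
  | mk zl zr zL zR ihzl ihzr =>
  refine ⟨le_iff_forall_lf.2 ⟨?_, ?_⟩, le_iff_forall_lf.2 ⟨?_, ?_⟩⟩
  · rintro ((i | i) | i)
    · exact lf_of_le_moveLeft (i := Sum.inl i) (ihxl i _ _).1
    · exact lf_of_le_moveLeft (i := Sum.inr (Sum.inl i)) (ihyl i _).1
    · exact lf_of_le_moveLeft (i := Sum.inr (Sum.inr i)) (ihzl i).1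
  · rintro (j | j | j)
    · exact lf_of_moveRight_le (j := Sum.inl (Sum.inl j)) (ihxr j _ _).1
    · exact lf_of_moveRight_le (j := Sum.inl (Sum.inr j)) (ihyr j _).1
    · exact lf_of_moveRight_le (j := Sum.inr j) (ihzr j).1
  · rintro (i | i | i)
    · exact lf_of_le_moveLeft (i := Sum.inl (Sum.inl i))
        (ihxl i (mk yl yr yL yR) (mk zl zr zL zR)).2
    · exact lf_of_le_moveLeft (i := Sum.inl (Sum.inr i)) (ihyl i (mk zl zr zL zR)).2
    · exact lf_of_le_moveLeft (i := Sum.inr i) (ihzl i).2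
  · rintro ((j | j) | j)
    · exact lf_of_moveRight_le (j := Sum.inl j) (ihxr j (mk yl yr yL yR) (mk zl zr zL zR)).2
    · exact lf_of_moveRight_le (j := Sum.inr (Sum.inl j)) (ihyr j (mk zl zr zL zR)).2
    · exact lf_of_moveRight_le (j := Sum.inr (Sum.inr j)) (ihzr j).2

theorem neg_le_neg_aux (x y : PGame.{u}) : (x ≤ y → -y ≤ -x) ∧ (x ⧏ y → -y ⧏ -x) := by
  induction x generalizing y with
  | mk xl xr xL xR ihxl ihxr =>
  induction y with
  | mk yl yr yL yR ihyl ihyr =>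
  refine ⟨fun h => le_iff_forall_lf.2 ⟨fun i => ?_, fun j => ?_⟩, fun h => ?_⟩
  · exact (ihyr i).2 (h.lf_moveRight i)
  · exact (ihxl j _).2 (h.moveLeft_lf j)
  · rcases lf_iff_exists_le.1 h with ⟨i, hi⟩ | ⟨j, hj⟩
    · exact lf_of_moveRight_le (j := i) ((ihyl i).1 hi)
    · exact lf_of_le_moveLeft (i := j) ((ihxr j _).1 hj)

theorem neg_le_neg' {x y : PGame.{u}} (h : x ≤ y) : -y ≤ -x :=
  (neg_le_neg_aux x y).1 h

theorem neg_add_cancel_equiv (x : PGame.{u}) : equivRel (-x + x) 0 := by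
  induction x with
  | mk xl xr xL xR ihl ihr =>
  refine ⟨le_iff_forall_lf.2 ⟨?_, nofun⟩, le_iff_forall_lf.2 ⟨nofun, ?_⟩⟩
  · rintro (i | i)
    · exact add_lf_of_add_moveRight_le (z := mk xl xr xL xR) i (ihr i).1
    · exact add_lf_of_moveRight_add_le (y := -mk xl xr xL xR) i (ihl i).1
  · rintro (j | j)
    · exact lf_add_of_le_add_moveLeft (z := mk xl xr xL xR) j (ihl j).2
    · exact lf_add_of_le_moveLeft_add (y := -mk xl xr xL xR) j (ihr j).2

end SetTheory.PGame

namespace SetTheory.Game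

theorem mk_eq_mk {x y : PGame.{u}} : (⟦x⟧ : Game) = ⟦y⟧ ↔ equivRel x y := by
  refine ⟨fun h => ?_, fun h => Quotient.sound (.rel _ _ h)⟩
  replace h := Quotient.exact h
  induction h with
  | rel _ _ h => exact h
  | refl => exact ⟨le_rfl, le_rfl⟩
  | symm _ _ _ ih => exact ih.symm
  | trans _ _ _ _ _ ih₁ ih₂ => exact ⟨ih₁.1.trans ih₂.1, ih₂.2.trans ih₁.2⟩

theorem mk_le_mk {x y : PGame.{u}} : (⟦x⟧ : Game) ≤ ⟦y⟧ ↔ x ≤ y := by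
  refine ⟨fun h => ?_, fun h => Quotient.mk_monotone h⟩
  have le_of_equiv {a b : PGame.{u}} (h : a ≈ b) : a ≤ b := (mk_eq_mk.1 (Quotient.sound h)).1
  replace h := Quotient.le_def.1 h
  induction h with
  | single h => exact h.elim id le_of_equiv
  | tail _ h ih => exact h.elim ih.trans fun h => ih.trans (le_of_equiv h)

instance : PartialOrder Game.{u} where
  le_antisymm a b := Quotient.inductionOn₂ a b fun _ _ h₁ h₂ =>
    mk_eq_mk.2 ⟨mk_le_mk.1 h₁, mk_le_mk.1 h₂⟩

theorem mk_lt_mk {x y : PGame.{u}} : (⟦x⟧ : Game) < ⟦y⟧ ↔ x < y := by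
  simp only [lt_iff_le_not_ge, mk_le_mk]

theorem lf_of_mk_lt {x y : PGame.{u}} (h : (⟦x⟧ : Game) < ⟦y⟧) : x ⧏ y :=
  (mk_lt_mk.1 h).2

theorem equivRel_out_mk (x : PGame.{u}) : equivRel (⟦x⟧ : Game).out x :=
  mk_eq_mk.1 (Quotient.out_eq _)

@[simp]
theorem mk_zero : (⟦0⟧ : Game.{u}) = 0 := rfl

@[simp]
theorem mk_add (x y : PGame.{u}) : (⟦x + y⟧ : Game) = ⟦x⟧ + ⟦y⟧ := by
  obtain ⟨hx₁, hx₂⟩ := equivRel_out_mk x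
  obtain ⟨hy₁, hy₂⟩ := equivRel_out_mk y
  exact mk_eq_mk.2 ⟨(add_le_add_right' hx₂ _).trans (add_le_add_left' hy₂ _),
    (add_le_add_right' hx₁ _).trans (add_le_add_left' hy₁ _)⟩

@[simp]
theorem mk_neg (x : PGame.{u}) : (⟦-x⟧ : Game) = -⟦x⟧ := by
  obtain ⟨hx₁, hx₂⟩ := equivRel_out_mk x
  exact mk_eq_mk.2 ⟨neg_le_neg' hx₁, neg_le_neg' hx₂⟩

instance : AddCommGroup Game.{u} where
  add_assoc a b c := Quotient.inductionOn₃ a b c fun x y z => by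
    simpa only [mk_add] using mk_eq_mk.2 (add_assoc_equiv x y z)
  zero_add a := Quotient.inductionOn a fun x => by
    have h := add_zero_equiv x
    simpa only [mk_add, mk_zero] using mk_eq_mk.2
      ⟨(add_comm_le 0 x).trans h.1, h.2.trans (add_comm_le x 0)⟩
  add_zero a := Quotient.inductionOn a fun x => by
    simpa only [mk_add, mk_zero] using mk_eq_mk.2 (add_zero_equiv x)
  add_comm a b := Quotient.inductionOn₂ a b fun x y => by
    simpa only [mk_add] using mk_eq_mk.2 ⟨add_comm_le x y, add_comm_le y x⟩
  neg_add_cancel a := Quotient.inductionOn a fun x => by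
    simpa only [mk_add, mk_neg, mk_zero] using mk_eq_mk.2 (neg_add_cancel_equiv x)
  nsmul := nsmulRec
  zsmul n a := n • a
  zsmul_zero' _ := rfl
  zsmul_succ' _ _ := rfl
  zsmul_neg' _ _ := rfl
  sub_eq_add_neg _ _ := rfl

instance : IsOrderedAddMonoid Game.{u} where
  add_le_add_left a b h c := by
    induction a using Quotient.inductionOn with | h x
    induction b using Quotient.inductionOn with | h y
    induction c using Quotient.inductionOn with | h z
    simpa only [mk_add] using mk_le_mk.2 (add_le_add_right' (mk_le_mk.1 h) z)

instance : One Game.{u} := ⟨⟦1⟧⟩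

end SetTheory.Game

namespace SetTheory.PGame

theorem zero_lf_powHalf (n : ℕ) : 0 ⧏ powHalf.{u} n := by
  cases n <;> exact lf_of_le_moveLeft (i := PUnit.unit) le_rfl

theorem zero_lt_powHalf (n : ℕ) : 0 < powHalf.{u} n := by
  refine ⟨le_iff_forall_lf.2 ⟨nofun, fun j => ?_⟩, zero_lf_powHalf n⟩
  cases n with
  | zero => exact PEmpty.elim j
  | succ n => exact zero_lf_powHalf n

theorem powHalf_succ_lt (n : ℕ) : powHalf.{u} (n + 1) < powHalf n := by
  refine ⟨?_, lf_of_moveRight_le (j := PUnit.unit) le_rfl⟩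
  induction n with
  | zero => exact le_iff_forall_lf.2 ⟨fun _ => zero_lf_powHalf 0, nofun⟩
  | succ n ih =>
    exact le_iff_forall_lf.2 ⟨fun _ => zero_lf_powHalf _,
      fun _ => lf_of_moveRight_le (j := PUnit.unit) ih⟩

end SetTheory.PGame

namespace SetTheory.Game

def powHalf (n : ℕ) : Game.{u} := ⟦PGame.powHalf n⟧

@[simp]
theorem mk_powHalf (n : ℕ) : (⟦PGame.powHalf n⟧ : Game.{u}) = powHalf n := rfl

theorem powHalf_zero : powHalf.{u} 0 = 1 := rfl

theorem powHalf_pos (n : ℕ) : 0 < powHalf.{u} n :=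
  mk_lt_mk.2 (zero_lt_powHalf n)

theorem powHalf_succ_lt (n : ℕ) : powHalf.{u} (n + 1) < powHalf n :=
  mk_lt_mk.2 (PGame.powHalf_succ_lt n)

theorem powHalf_antitone : Antitone powHalf.{u} :=
  antitone_nat_of_succ_le fun n => (powHalf_succ_lt n).le

theorem powHalf_succ_add_powHalf_succ (n : ℕ) :
    powHalf.{u} (n + 1) + powHalf (n + 1) = powHalf n := by
  have hlt (k : ℕ) := powHalf_succ_lt.{u} k
  have hpos (k : ℕ) := powHalf_pos.{u} k
  have options_lf (k : ℕ) :
      ∀ i, (PGame.powHalf.{u} (k + 1) + PGame.powHalf (k + 1)).moveLeft i ⧏ PGame.powHalf k := by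
    rintro (⟨⟩ | ⟨⟩) <;> refine lf_of_mk_lt ?_
    · change (⟦0 + PGame.powHalf (k + 1)⟧ : Game) < ⟦PGame.powHalf k⟧
      simpa only [mk_add, mk_zero, mk_powHalf, zero_add] using hlt k
    · change (⟦PGame.powHalf (k + 1) + 0⟧ : Game) < ⟦PGame.powHalf k⟧
      simpa only [mk_add, mk_zero, mk_powHalf, add_zero] using hlt k
  have le_add_self (k : ℕ) :
      PGame.powHalf.{u} k ≤ PGame.powHalf (k + 1) + PGame.powHalf (k + 1) := by
    refine le_iff_forall_lf.2 ⟨fun i => lf_of_mk_lt ?_, ?_⟩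
    · rw [show (PGame.powHalf k).moveLeft i = 0 by cases k <;> rfl, mk_add]
      exact add_pos (hpos _) (hpos _)
    · rintro (⟨⟩ | ⟨⟩) <;> refine lf_of_mk_lt ?_
      · change (⟦PGame.powHalf k⟧ : Game) < ⟦PGame.powHalf k + PGame.powHalf (k + 1)⟧
        simpa only [mk_add, mk_powHalf] using lt_add_of_pos_right _ (hpos (k + 1))
      · change (⟦PGame.powHalf k⟧ : Game) < ⟦PGame.powHalf (k + 1) + PGame.powHalf k⟧
        simpa only [mk_add, mk_powHalf] using lt_add_of_pos_left _ (hpos (k + 1))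
  rw [powHalf, powHalf, ← mk_add]
  induction n with
  | zero => exact mk_eq_mk.2 ⟨le_iff_forall_lf.2 ⟨options_lf 0, nofun⟩, le_add_self 0⟩
  | succ n ih =>
    refine mk_eq_mk.2 ⟨le_iff_forall_lf.2 ⟨options_lf _, fun _ => ?_⟩, le_add_self _⟩
    refine add_lf_of_moveRight_add_le PUnit.unit (mk_le_mk.1 ?_)
    change (⟦PGame.powHalf (n + 1) + PGame.powHalf (n + 2)⟧ : Game) ≤ ⟦PGame.powHalf n⟧
    rw [← ih, mk_add, mk_add]
    exact add_le_add_right (hlt _).le _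

theorem two_pow_nsmul_powHalf_add (s n : ℕ) : 2 ^ s • powHalf.{u} (n + s) = powHalf n := by
  induction s with
  | zero => simp
  | succ s ih =>
    rw [pow_succ, mul_nsmul, two_nsmul, ← add_assoc, ← nsmul_add, powHalf_succ_add_powHalf_succ, ih]

theorem nsmul_powHalf_add_le {a s : ℕ} (h : a ≤ 2 ^ s) (n : ℕ) :
    a • powHalf.{u} (n + s) ≤ powHalf n :=
  (nsmul_le_nsmul_left (powHalf_pos _).le h).trans_eq (two_pow_nsmul_powHalf_add s n)

@[simp]
theorem mk_one : (⟦1⟧ : Game.{u}) = 1 := rfl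

theorem mk_canonNat_succ (k : ℕ) : (⟦canonNat.{u} (k + 1)⟧ : Game) = ⟦canonNat k⟧ + 1 := by
  have lt_add_one (x : PGame.{u}) : x < x + 1 := by
    simpa only [← mk_lt_mk, mk_add, mk_one, ← powHalf_zero] using
      lt_add_of_pos_right _ (powHalf_pos 0)
  rw [← mk_one, ← mk_add]
  refine mk_eq_mk.2 ⟨le_iff_forall_lf.2 ⟨fun _ => (lt_add_one _).2, ?_⟩,
    le_iff_forall_lf.2 ⟨?_, nofun⟩⟩
  · cases k <;> rintro (j | j) <;> exact PEmpty.elim j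
  · have add_zero_lf : canonNat k + 0 ⧏ canonNat (k + 1) :=
      lf_of_le_moveLeft (i := PUnit.unit) (add_zero_equiv _).1
    cases k with
    | zero => rintro (⟨⟨⟩⟩ | ⟨⟩); exact add_zero_lf
    | succ k =>
      rintro (⟨⟩ | ⟨⟩)
      · refine lf_of_le_moveLeft (i := PUnit.unit) (mk_le_mk.1 ?_)
        change (⟦canonNat k + 1⟧ : Game) ≤ ⟦canonNat (k + 1)⟧
        rw [mk_add, mk_canonNat_succ k, mk_one]
      · exact add_zero_lf

theorem mk_canonNat (k : ℕ) : (⟦canonNat.{u} k⟧ : Game) = k • 1 := by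
  induction k with
  | zero => rfl
  | succ k ih => rw [mk_canonNat_succ, ih, succ_nsmul]

end SetTheory.Game

section

open Game

theorem ordinalSum_le_ordinalSum_aux (G H H' : PGame.{u}) :
    (H ≤ H' → ordinalSum G H ≤ ordinalSum G H') ∧ (H ⧏ H' → ordinalSum G H ⧏ ordinalSum G H') := by
  induction H generalizing H' with
  | mk yl yr yL yR ihL ihR =>
  induction H' with
  | mk zl zr zL zR jhL jhR =>
  refine ⟨fun h => le_iff_forall_lf.2 ⟨?_, ?_⟩, fun h => ?_⟩
  · rintro (i | i)
    · exact lf_of_le_moveLeft (i := Sum.inl i) le_rfl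
    · exact (ihL i _).2 (h.moveLeft_lf i)
  · rintro (j | j)
    · exact lf_of_moveRight_le (j := Sum.inl j) le_rfl
    · exact (jhR j).2 (h.lf_moveRight j)
  · rcases lf_iff_exists_le.1 h with ⟨i, hi⟩ | ⟨j, hj⟩
    · exact lf_of_le_moveLeft (i := Sum.inr i) ((jhL i).1 hi)
    · exact lf_of_moveRight_le (j := Sum.inr j) ((ihR j _).1 hj)

/-- Only the subordinate may be replaced by an equal game: `G : H` depends on the form of `G`. -/
theorem mk_ordinalSum_congr (G : PGame.{u}) {H H' : PGame.{u}} (h : (⟦H⟧ : Game) = ⟦H'⟧) :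
    (⟦ordinalSum G H⟧ : Game) = ⟦ordinalSum G H'⟧ :=
  mk_eq_mk.2 ⟨(ordinalSum_le_ordinalSum_aux G H H').1 (mk_eq_mk.1 h).1,
    (ordinalSum_le_ordinalSum_aux G H' H).1 (mk_eq_mk.1 h).2⟩

theorem EquivDom.mk_eq {G H : PGame.{u}} (h : EquivDom G H) : (⟦G⟧ : Game) = ⟦H⟧ := by
  obtain ⟨hGL, hHL, hGR, hHR⟩ := h
  refine mk_eq_mk.2 ⟨le_iff_forall_lf.2 ⟨fun i => ?_, fun j => ?_⟩,
    le_iff_forall_lf.2 ⟨fun j => ?_, fun i => ?_⟩⟩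
  · obtain ⟨j, hj⟩ := hGL i
    exact lf_of_le_moveLeft hj
  · obtain ⟨i, hi⟩ := hHR j
    exact lf_of_moveRight_le hi
  · obtain ⟨i, hi⟩ := hHL j
    exact lf_of_le_moveLeft hi
  · obtain ⟨j, hj⟩ := hGR i
    exact lf_of_moveRight_le hj

def OptionsApart (G : PGame.{u}) (d : Game.{u}) : Prop :=
  (∀ i, ⟦G.moveLeft i⟧ + d ≤ (⟦G⟧ : Game)) ∧ ∀ j, ⟦G⟧ + d ≤ (⟦G.moveRight j⟧ : Game)

theorem OptionsApart.mono {G : PGame.{u}} {d d' : Game.{u}} (h : OptionsApart G d)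
    (hd : d' ≤ d) : OptionsApart G d' :=
  ⟨fun i => (add_le_add_right hd _).trans (h.1 i),
    fun j => (add_le_add_right hd _).trans (h.2 j)⟩

theorem OptionsApart.neg {G : PGame.{u}} {d : Game.{u}} (h : OptionsApart G d) :
    OptionsApart (-G) d := by
  obtain ⟨gl, gr, L, R⟩ := G
  refine ⟨fun j => ?_, fun i => ?_⟩
  · change ⟦-R j⟧ + d ≤ (⟦-mk gl gr L R⟧ : Game)
    rw [mk_neg, mk_neg, ← le_sub_iff_add_le, sub_eq_add_neg, ← neg_add, neg_le_neg_iff]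
    exact h.2 j
  · change ⟦-mk gl gr L R⟧ + d ≤ (⟦-L i⟧ : Game)
    rw [mk_neg, mk_neg, ← le_sub_iff_add_le', sub_eq_add_neg, neg_neg, le_neg_add_iff_add_le]
    exact h.1 i

theorem mk_eq_add_powHalf_succ {G A : PGame.{u}} {k : ℕ}
    (hA : OptionsApart A (Game.powHalf (k + 1)))
    (hGL : ∀ i, (⟦G.moveLeft i⟧ : Game) ≤ ⟦A⟧) (hAG : ∃ i, (⟦A⟧ : Game) ≤ ⟦G.moveLeft i⟧)
    (hGR : ∀ j, ⟦A⟧ + Game.powHalf k ≤ (⟦G.moveRight j⟧ : Game))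
    (hRG : ∃ j, (⟦G.moveRight j⟧ : Game) ≤ ⟦A⟧ + Game.powHalf k) :
    (⟦G⟧ : Game) = ⟦A⟧ + Game.powHalf (k + 1) ∧ OptionsApart G (Game.powHalf (k + 1)) := by
  obtain ⟨i₀, hi₀⟩ := hAG
  obtain ⟨j₀, hj₀⟩ := hRG
  have hk := powHalf_succ_add_powHalf_succ.{u} k
  have hpos := powHalf_pos.{u} (k + 1)
  have hval : (⟦G⟧ : Game) = ⟦A⟧ + Game.powHalf (k + 1) := by
    obtain ⟨al, ar, AL, AR⟩ := A
    rw [← mk_powHalf, ← mk_add]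
    refine mk_eq_mk.2 ⟨le_iff_forall_lf.2 ⟨fun i => lf_of_mk_lt ?_, ?_⟩,
      le_iff_forall_lf.2 ⟨?_, fun j => lf_of_mk_lt ?_⟩⟩
    · rw [mk_add, mk_powHalf]
      exact (hGL i).trans_lt (lt_add_of_pos_right _ hpos)
    · rintro (j | ⟨⟩) <;> refine lf_of_moveRight_le (j := j₀) (mk_le_mk.1 (hj₀.trans ?_))
      · change _ ≤ ⟦AR j + PGame.powHalf (k + 1)⟧
        rw [mk_add, mk_powHalf, ← hk, ← add_assoc]
        exact add_le_add_left (hA.2 j) _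
      · change _ ≤ ⟦mk al ar AL AR + PGame.powHalf k⟧
        rw [mk_add, mk_powHalf]
    · rintro (i | ⟨⟩) <;> refine lf_of_le_moveLeft (i := i₀) (mk_le_mk.1 (le_trans ?_ hi₀))
      · change ⟦AL i + PGame.powHalf (k + 1)⟧ ≤ _
        rw [mk_add, mk_powHalf]
        exact hA.1 i
      · change ⟦mk al ar AL AR + 0⟧ ≤ _
        rw [mk_add, mk_zero, add_zero]
    · rw [mk_add, mk_powHalf]
      refine lt_of_lt_of_le ?_ (hGR j)
      exact add_lt_add_right (Game.powHalf_succ_lt k) _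
  refine ⟨hval, fun i => ?_, fun j => ?_⟩
  · rw [hval]
    exact add_le_add_left (hGL i) _
  · rw [hval, add_assoc, hk]
    exact hGR j

theorem optionsApart_canonNat (k : ℕ) : OptionsApart (canonNat.{u} k) 1 := by
  cases k with
  | zero => exact ⟨nofun, nofun⟩
  | succ k => exact ⟨fun _ => (mk_canonNat_succ k).ge, nofun⟩

theorem equivDom_ordinalSum_of_isEmpty (G H : PGame.{u}) (hl : IsEmpty H.LeftMoves)
    (hr : IsEmpty H.RightMoves) : EquivDom (ordinalSum G H) G := by
  obtain ⟨_, _, _, _⟩ := H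
  exact ⟨fun | .inl i => ⟨i, le_rfl⟩ | .inr i => (hl.false i).elim, fun i => ⟨.inl i, le_rfl⟩,
    fun | .inl j => ⟨j, le_rfl⟩ | .inr j => (hr.false j).elim, fun j => ⟨.inl j, le_rfl⟩⟩

theorem mk_ordinalSum_canonNat_neg_canonNat (n k : ℕ) :
    (⟦ordinalSum (canonNat.{u} (n + 1)) (-canonNat k)⟧ : Game) = ⟦canonNat n⟧ + Game.powHalf k ∧
      OptionsApart (ordinalSum (canonNat.{u} (n + 1)) (-canonNat k)) (Game.powHalf k) := by
  induction k with
  | zero =>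
    have hval : (⟦ordinalSum (canonNat.{u} (n + 1)) (-canonNat 0)⟧ : Game) =
        ⟦canonNat n⟧ + Game.powHalf 0 := by
      rw [(equivDom_ordinalSum_of_isEmpty _ _ ⟨PEmpty.elim⟩ ⟨PEmpty.elim⟩).mk_eq, mk_canonNat_succ,
        powHalf_zero]
    exact ⟨hval, fun | .inl _ => hval.ge, nofun⟩
  | succ k ih =>
    refine mk_eq_add_powHalf_succ ((optionsApart_canonNat n).mono ?_) ?_ ⟨.inl .unit, le_rfl⟩ ?_
      ⟨.inr .unit, ih.1.le⟩
    · exact Game.powHalf_antitone (Nat.zero_le _)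
    · rintro (_ | ⟨⟨⟩⟩)
      exact le_rfl
    · rintro (⟨⟨⟩⟩ | _)
      exact ih.1.ge

theorem Nat.dyadic_induction {P : ℕ → ℕ → Prop} (base : ∀ b ≤ 1, P 0 b)
    (even : ∀ q c, c ≤ 2 ^ q → P q c → P (q + 1) (2 * c))
    (odd : ∀ q c, c + 1 ≤ 2 ^ q → P q (c + 1) → P q c → P (q + 1) (2 * c + 1)) :
    ∀ q b, b ≤ 2 ^ q → P q b
  | 0, b, hb => base b (by simpa using hb)
  | q + 1, b, hb => by
    rw [pow_succ] at hb
    obtain ⟨c, rfl | rfl⟩ := Nat.even_or_odd' b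
    · exact even q c (by omega) (dyadic_induction base even odd q c (by omega))
    · exact odd q c (by omega) (dyadic_induction base even odd q (c + 1) (by omega))
        (dyadic_induction base even odd q c (by omega))

/-- The canonical form of the dyadic rational `-(m + b / 2 ^ q)`, for `b ≤ 2 ^ q`. -/
def negDyadicForm (m : ℕ) : ℕ → ℕ → PGame.{u}
  | 0, b => -canonNat (m + b)
  | q + 1, b =>
    if Even b then negDyadicForm m q (b / 2)
    else ball (negDyadicForm m q (b / 2 + 1)) (negDyadicForm m q (b / 2))

theorem negDyadicForm_succ_two_mul (m q c : ℕ) :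
    negDyadicForm.{u} m (q + 1) (2 * c) = negDyadicForm m q c := by
  simp [negDyadicForm]

theorem negDyadicForm_succ_two_mul_add_one (m q c : ℕ) :
    negDyadicForm.{u} m (q + 1) (2 * c + 1) =
      ball (negDyadicForm m q (c + 1)) (negDyadicForm m q c) := by
  simp [negDyadicForm, Nat.add_div_of_dvd_right]

theorem mk_negDyadicForm (m : ℕ) : ∀ q b, b ≤ 2 ^ q →
    (⟦negDyadicForm.{u} m q b⟧ : Game) = -(⟦canonNat m⟧ + b • Game.powHalf q) ∧
      OptionsApart (negDyadicForm.{u} m q b) (Game.powHalf q) := by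
  refine Nat.dyadic_induction (fun b _ => ?_) (fun q c _ ih => ?_) (fun q c _ ihA ihB => ?_)
  · refine ⟨?_, (optionsApart_canonNat _).neg⟩
    change (⟦-canonNat (m + b)⟧ : Game) = _
    rw [mk_neg, mk_canonNat, mk_canonNat, add_nsmul, Game.powHalf_zero]
  · have hq := Game.powHalf_succ_add_powHalf_succ.{u} q
    rw [negDyadicForm_succ_two_mul]
    refine ⟨?_, ih.2.mono (Game.powHalf_succ_lt q).le⟩
    rw [ih.1, ← hq]
    module
  · have hq := Game.powHalf_succ_add_powHalf_succ.{u} q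
    rw [negDyadicForm_succ_two_mul_add_one]
    have hBA : (⟦negDyadicForm.{u} m q c⟧ : Game) =
        ⟦negDyadicForm m q (c + 1)⟧ + Game.powHalf q := by
      rw [ihA.1, ihB.1]
      module
    have h := mk_eq_add_powHalf_succ (G := ball (negDyadicForm m q (c + 1)) (negDyadicForm m q c))
      (ihA.2.mono (Game.powHalf_succ_lt q).le) (fun _ => le_rfl) ⟨.unit, le_rfl⟩
      (fun _ => hBA.ge) ⟨.unit, hBA.le⟩
    refine ⟨?_, h.2⟩
    rw [h.1, ihA.1, ← hq]
    module

theorem mk_ordinalSum_negDyadicForm (n m : ℕ) : ∀ q b, b ≤ 2 ^ q →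
    (⟦ordinalSum (canonNat.{u} (n + 1)) (negDyadicForm m q b)⟧ : Game) =
        ⟦canonNat n⟧ + Game.powHalf m - b • Game.powHalf (m + q + 1) ∧
      OptionsApart (ordinalSum (canonNat.{u} (n + 1)) (negDyadicForm m q b))
        (Game.powHalf (m + q + 1)) := by
  refine Nat.dyadic_induction (fun b hb => ?_) (fun q c _ ih => ?_) (fun q c hc ihA ihB => ?_)
  · have hm := Game.powHalf_succ_add_powHalf_succ.{u} m
    obtain ⟨hval, hapart⟩ := mk_ordinalSum_canonNat_neg_canonNat.{u} n (m + b)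
    refine ⟨hval.trans ?_, hapart.mono (Game.powHalf_antitone (by omega))⟩
    obtain rfl | rfl : b = 0 ∨ b = 1 := by omega
    · simp
    · rw [← hm]
      module
  · have hk := Game.powHalf_succ_add_powHalf_succ.{u} (m + q + 1)
    rw [negDyadicForm_succ_two_mul, show m + (q + 1) + 1 = m + q + 1 + 1 by omega]
    refine ⟨?_, ih.2.mono (Game.powHalf_succ_lt _).le⟩
    rw [ih.1, ← hk]
    module
  · have hk := Game.powHalf_succ_add_powHalf_succ.{u} (m + q + 1)
    rw [negDyadicForm_succ_two_mul_add_one, show m + (q + 1) + 1 = m + q + 1 + 1 by omega]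
    set N := canonNat.{u} (n + 1)
    have hBA : (⟦ordinalSum N (negDyadicForm m q c)⟧ : Game) =
        ⟦ordinalSum N (negDyadicForm m q (c + 1))⟧ + Game.powHalf (m + q + 1) := by
      rw [ihA.1, ihB.1]
      module
    have hnA : (⟦canonNat.{u} n⟧ : Game) ≤ ⟦ordinalSum N (negDyadicForm m q (c + 1))⟧ := by
      have : (c + 1) • Game.powHalf.{u} (m + q + 1) ≤ Game.powHalf m :=
        Game.nsmul_powHalf_add_le (s := q + 1) (by rw [pow_succ]; omega) m
      rw [ihA.1, add_sub_assoc]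
      exact le_add_of_nonneg_right (sub_nonneg.2 this)
    have h := mk_eq_add_powHalf_succ
      (G := ordinalSum N (ball (negDyadicForm m q (c + 1)) (negDyadicForm m q c)))
      (ihA.2.mono (Game.powHalf_succ_lt _).le) (fun | .inl _ => hnA | .inr _ => le_rfl)
      ⟨.inr .unit, le_rfl⟩ (fun | .inr _ => hBA.ge) ⟨.inr .unit, hBA.le⟩
    refine ⟨?_, h.2⟩
    rw [h.1, ihA.1, ← hk]
    module

end

theorem canon_ordinalSum_neg_general (n m q b : ℕ) (hn : 1 ≤ n)
    (hb : b = 0 ∨ (Odd b ∧ 0 < b ∧ b < 2 ^ q))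
    (H : PGame)
    (hHval : (⟦H⟧ : Game) = -(dyadicVal m 0 + dyadicVal b q)) :
    (⟦ordinalSum (canonNat n) H⟧ : Game) =
      dyadicVal ((n : ℤ) - 1) 0 + ⟦powHalf m⟧ - dyadicVal b (m + q + 1) := by
  obtain ⟨n, rfl⟩ : ∃ k, n = k + 1 := ⟨n - 1, by omega⟩
  have hbq : b ≤ 2 ^ q := by
    rcases hb with rfl | ⟨-, -, h⟩
    · exact Nat.zero_le _
    · exact h.le
  have hH : (⟦H⟧ : Game) = ⟦negDyadicForm m q b⟧ := by
    rw [hHval, (mk_negDyadicForm m q b hbq).1, Game.mk_canonNat]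
    simp only [dyadicVal, Game.mk_powHalf, natCast_zsmul, Game.powHalf_zero]
  rw [mk_ordinalSum_congr _ hH, (mk_ordinalSum_negDyadicForm n m q b hbq).1, Game.mk_canonNat]
  simp only [dyadicVal, Game.mk_powHalf, natCast_zsmul, Game.powHalf_zero, Nat.cast_add,
    Nat.cast_one, add_sub_cancel_right]

/-- For integers `n ≥ 1`, `m, q ≥ 0` and `b` either `0` or odd with `0 < b < 2^q`, with
`m + b/2^q > 0`, `N` the canonical form of `n`, and any number `H` of value
`−(m + b/2^q)`: `N : H = n − 1 + 1/2^m − b/2^{m+q+1}`. -/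
theorem canon_ordinalSum_neg (n m q b : ℕ) (hn : 1 ≤ n)
    (hb : b = 0 ∨ (Odd b ∧ 0 < b ∧ b < 2 ^ q))
    (hpos : 0 < (m : ℚ) + (b : ℚ) / 2 ^ q)
    (H : PGame) (hH : H.Numeric)
    (hHval : (⟦H⟧ : Game) = -(dyadicVal m 0 + dyadicVal b q)) :
    (⟦ordinalSum (canonNat n) H⟧ : Game) =
      dyadicVal ((n : ℤ) - 1) 0 + ⟦powHalf m⟧ - dyadicVal b (m + q + 1) :=
  canon_ordinalSum_neg_general n m q b hn hb H hHval
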